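/- Let φ : I → R be a lower semicontinuous function on an interval I ⊆ R. Suppose the set Î of global minimizers of φ is an interval (possibly empty) on which φ is constant, φ is strictly increasing on I₊ = {t ∈ I : t ≥ s for all s ∈ Î} (or strictly monotone on I if Î = ∅), strictly decreasing on I₋ = {t ∈ I : t ≤ s for all s ∈ Î}, and φ has no stationary points in I \ Î. Then φ is pseudoconvex with respect to the lower Dini derivative. -/

import Mathlib

/-!
If `φ t < φ s`, then `s` is not a minimizer, hence not stationary: some admissible direction `u`
has `dini φ s u < 0`, so `φ` drops below `φ s` at points `s + k u ∈ I` with `k > 0`. The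
monotonicity hypotheses put every point of `I` where `φ < φ s` on one side of `s` (the side away
from the order-connected set of minimizers), so `t - s` is a positive multiple of `u`, and the
lower Dini derivative is positively homogeneous in the direction.
-/

open Filter Set

/-- Lower Dini directional derivative of a function of one real variable. -/
noncomputable def dini (φ : ℝ → ℝ) (s u : ℝ) : ℝ :=
  liminf (fun h : ℝ => (φ (s + h * u) - φ s) / h) (nhdsWithin 0 (Ioi 0))

/-- Pseudoconvexity w.r.t. the lower Dini derivative, one variable. -/
def PseudoconvexOn (φ : ℝ → ℝ) (I : Set ℝ) : Prop :=
  ∀ s ∈ I, ∀ t ∈ I, φ t < φ s → dini φ s (t - s) < 0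

/-- A direction `u` is admissible at `s` relative to `I`. -/
def Admissible (I : Set ℝ) (s u : ℝ) : Prop :=
  ∃ δ > 0, ∀ h ∈ Ioo (0:ℝ) δ, s + h * u ∈ I

/-- `s` is a stationary point of `φ` relative to `I`. -/
def Stationary (φ : ℝ → ℝ) (I : Set ℝ) (s : ℝ) : Prop :=
  ∀ u : ℝ, Admissible I s u → 0 ≤ dini φ s u

/-- The set of global minimizers of `φ` over `I`. -/
def ArgminSet (φ : ℝ → ℝ) (I : Set ℝ) : Set ℝ := {t ∈ I | ∀ s ∈ I, φ t ≤ φ s}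

open scoped Topology

/-- No boundedness is needed: `Real.sSup_smul_of_nonneg` also covers the junk value `0` of
`sSup` on empty and unbounded sets. -/
lemma Real.liminf_const_mul_of_pos {α : Type*} (f : α → ℝ) (l : Filter α) {c : ℝ} (hc : 0 < c) :
    liminf (fun x => c * f x) l = c * liminf f l := by
  simp only [liminf_eq, ← smul_eq_mul, ← Real.sSup_smul_of_nonneg hc.le]
  congr 1
  ext a
  simp only [mem_ofPred_eq, mem_smul_set_iff_inv_smul_mem₀ hc.ne', smul_eq_mul]
  refine eventually_congr (Eventually.of_forall fun x => ?_)
  rw [inv_mul_le_iff₀ hc]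

lemma dini_mul_of_pos (φ : ℝ → ℝ) (s u : ℝ) {c : ℝ} (hc : 0 < c) :
    dini φ s (c * u) = c * dini φ s u := by
  set q : ℝ → ℝ := fun k => (φ (s + k * u) - φ s) / k
  have hquot : (fun h : ℝ => (φ (s + h * (c * u)) - φ s) / h) = (fun k => c * q k) ∘ (c * ·) := by
    ext h
    rcases eq_or_ne h 0 with rfl | hh
    · simp [q]
    · simp only [q, Function.comp_apply, ← mul_assoc, mul_comm h c]
      field_simp
  have hmap : map (c * ·) (𝓝[>] (0 : ℝ)) = 𝓝[>] 0 := by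
    conv_lhs => rw [← comap_mulLeft_nhdsGT_zero hc]
    exact map_comap_of_surjective (mul_left_surjective₀ hc.ne') _
  rw [dini, hquot, liminf_comp, hmap, Real.liminf_const_mul_of_pos q _ hc, dini]

lemma frequently_lt_of_dini_neg {φ : ℝ → ℝ} {s u : ℝ} (h : dini φ s u < 0) :
    ∃ᶠ k in 𝓝[>] 0, φ (s + k * u) < φ s := by
  contrapose! h
  refine Real.sSup_nonneg' ⟨0, ?_, le_rfl⟩
  filter_upwards [h, self_mem_nhdsWithin] with k hk hk0
  exact div_nonneg (sub_nonneg.2 hk) (le_of_lt hk0)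

lemma Admissible.exists_apply_lt_of_dini_neg {φ : ℝ → ℝ} {I : Set ℝ} {s u : ℝ}
    (hadm : Admissible I s u) (h : dini φ s u < 0) :
    ∃ k > 0, s + k * u ∈ I ∧ φ (s + k * u) < φ s := by
  obtain ⟨δ, hδ, hmem⟩ := hadm
  have hI : ∀ᶠ k in 𝓝[>] (0 : ℝ), 0 < k ∧ s + k * u ∈ I := by
    filter_upwards [Ioo_mem_nhdsGT hδ] with k hk using ⟨hk.1, hmem k hk⟩
  obtain ⟨k, hlt, hk, hkI⟩ := ((frequently_lt_of_dini_neg h).and_eventually hI).exists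
  exact ⟨k, hk, hkI, hlt⟩

lemma MonotoneOn.lt_of_apply_lt {φ : ℝ → ℝ} {J : Set ℝ} (hφ : MonotoneOn φ J) {s q : ℝ}
    (hs : s ∈ J) (hq : s ≤ q → q ∈ J) (h : φ q < φ s) : q < s := by
  by_contra! hsq
  exact (hφ hs (hq hsq) hsq).not_gt h

lemma AntitoneOn.lt_of_apply_lt {φ : ℝ → ℝ} {J : Set ℝ} (hφ : AntitoneOn φ J) {s q : ℝ}
    (hs : s ∈ J) (hq : q ≤ s → q ∈ J) (h : φ q < φ s) : s < q := by
  by_contra! hqs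
  exact (hφ (hq hqs) hs hqs).not_gt h

lemma Set.OrdConnected.forall_le_or_forall_ge_of_notMem {A : Set ℝ} (hA : A.OrdConnected)
    {s : ℝ} (hs : s ∉ A) : (∀ a ∈ A, a ≤ s) ∨ (∀ a ∈ A, s ≤ a) := by
  by_contra! h
  obtain ⟨⟨a, ha, hsa⟩, ⟨b, hb, hbs⟩⟩ := h
  exact hs (hA.out hb ha ⟨hbs.le, hsa.le⟩)

lemma strictSublevel_subset_Iio_or_Ioi_of_notMem {φ : ℝ → ℝ} {I A : Set ℝ}
    (hA : A.OrdConnected) (hmono : MonotoneOn φ {t ∈ I | ∀ a ∈ A, a ≤ t})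
    (hanti : AntitoneOn φ {t ∈ I | ∀ a ∈ A, t ≤ a}) {s : ℝ} (hs : s ∈ I) (hsA : s ∉ A) :
    {q ∈ I | φ q < φ s} ⊆ Iio s ∨ {q ∈ I | φ q < φ s} ⊆ Ioi s := by
  rcases hA.forall_le_or_forall_ge_of_notMem hsA with hle | hge
  · refine .inl fun q hq => hmono.lt_of_apply_lt ⟨hs, hle⟩ ?_ hq.2
    exact fun hsq => ⟨hq.1, fun a ha => (hle a ha).trans hsq⟩
  · refine .inr fun q hq => hanti.lt_of_apply_lt ⟨hs, hge⟩ ?_ hq.2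
    exact fun hqs => ⟨hq.1, fun a ha => hqs.trans (hge a ha)⟩

lemma strictSublevel_subset_Iio_or_Ioi {φ : ℝ → ℝ} {I : Set ℝ}
    (hi : (ArgminSet φ I = ∅ ∧ (StrictMonoOn φ I ∨ StrictAntiOn φ I)) ∨
      ((ArgminSet φ I).Nonempty ∧ Convex ℝ (ArgminSet φ I) ∧
        (∀ a ∈ ArgminSet φ I, ∀ b ∈ ArgminSet φ I, φ a = φ b) ∧
        StrictMonoOn φ {t ∈ I | ∀ s ∈ ArgminSet φ I, s ≤ t} ∧
        StrictAntiOn φ {t ∈ I | ∀ s ∈ ArgminSet φ I, t ≤ s}))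
    {s : ℝ} (hs : s ∈ I \ ArgminSet φ I) :
    {q ∈ I | φ q < φ s} ⊆ Iio s ∨ {q ∈ I | φ q < φ s} ⊆ Ioi s := by
  rcases hi with ⟨-, hmono | hanti⟩ | ⟨-, hconv, -, hmono, hanti⟩
  · exact .inl fun q hq => hmono.monotoneOn.lt_of_apply_lt hs.1 (fun _ => hq.1) hq.2
  · exact .inr fun q hq => hanti.antitoneOn.lt_of_apply_lt hs.1 (fun _ => hq.1) hq.2
  · exact strictSublevel_subset_Iio_or_Ioi_of_notMem hconv.ordConnected hmono.monotoneOn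
      hanti.antitoneOn hs.1 hs.2

theorem stmt19_general (I : Set ℝ) (φ : ℝ → ℝ)
    (hi : (ArgminSet φ I = ∅ ∧ (StrictMonoOn φ I ∨ StrictAntiOn φ I)) ∨
      ((ArgminSet φ I).Nonempty ∧ Convex ℝ (ArgminSet φ I) ∧
        (∀ a ∈ ArgminSet φ I, ∀ b ∈ ArgminSet φ I, φ a = φ b) ∧
        StrictMonoOn φ {t ∈ I | ∀ s ∈ ArgminSet φ I, s ≤ t} ∧
        StrictAntiOn φ {t ∈ I | ∀ s ∈ ArgminSet φ I, t ≤ s}))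
    (hii : ∀ t ∈ I \ ArgminSet φ I, ¬ Stationary φ I t) :
    PseudoconvexOn φ I := by
  intro s hs t ht hts
  have hsA : s ∈ I \ ArgminSet φ I := ⟨hs, fun hmin => (hmin.2 t ht).not_gt hts⟩
  obtain ⟨u, hadm, hu⟩ : ∃ u, Admissible I s u ∧ dini φ s u < 0 := by
    simpa [Stationary] using hii s hsA
  obtain ⟨k, hk, hkI, hklt⟩ := hadm.exists_apply_lt_of_dini_neg hu
  have hsign : 0 < (t - s) * u := by
    rcases strictSublevel_subset_Iio_or_Ioi hi hsA with hlt | hgt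
    · have ht' : t < s := hlt ⟨ht, hts⟩
      have hku : s + k * u < s := hlt ⟨hkI, hklt⟩
      nlinarith
    · have ht' : s < t := hgt ⟨ht, hts⟩
      have hku : s < s + k * u := hgt ⟨hkI, hklt⟩
      nlinarith
  have hu0 : u ≠ 0 := right_ne_zero_of_mul hsign.ne'
  have hc : 0 < (t - s) / u := div_pos_iff.2 (mul_pos_iff.1 hsign)
  rw [← div_mul_cancel₀ (t - s) hu0, dini_mul_of_pos φ s u hc]
  exact mul_neg_of_pos_of_neg hc hu

theorem stmt19 (I : Set ℝ) (hI : I.OrdConnected) (φ : ℝ → ℝ)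
    (hlsc : LowerSemicontinuousOn φ I)
    (hi : (ArgminSet φ I = ∅ ∧ (StrictMonoOn φ I ∨ StrictAntiOn φ I)) ∨
      ((ArgminSet φ I).Nonempty ∧ Convex ℝ (ArgminSet φ I) ∧
        (∀ a ∈ ArgminSet φ I, ∀ b ∈ ArgminSet φ I, φ a = φ b) ∧
        StrictMonoOn φ {t ∈ I | ∀ s ∈ ArgminSet φ I, s ≤ t} ∧
        StrictAntiOn φ {t ∈ I | ∀ s ∈ ArgminSet φ I, t ≤ s}))
    (hii : ∀ t ∈ I \ ArgminSet φ I, ¬ Stationary φ I t) :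
    PseudoconvexOn φ I :=
  stmt19_general I φ hi hii
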